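/- arXiv:2410.19237 — 4 statements merged into one kernel-verified Lean document; each statement's English description precedes it below -/
import Mathlib

section
/- Fix an integer n ≥ 1 and set b := -n + i. For an integer s (viewed as a real Gaussian integer), T_n ∩ (T_n + s) ≠ ∅ if and only if s ∈ {-1, 0, 1}. That is, the set of real neighbours of the n-th fundamental tile T_n is {0, 1, -1}. -/
/-!
An integer `s` is a neighbour of `T_n` iff `s = ∑ c_j b^{-j}` with `|c_j| ≤ n²`. The remainders
`u_k = b^k (s - ∑_{j ≤ k} c_j b^{-j})` then form an orbit `u_{k+1} = b u_k - c_k` of Gaussian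
integers with `|u_k| ≤ n² / (|b| - 1) = |b| + 1 < n + 2`, so `x_k² + y_k² ≤ n² + 2n + 3` for
`u_k = x_k + i y_k`; conversely a bounded orbit starting at `s` gives such a representation of `s`.
Now `y_{k+1} = x_k - n y_k` and `y_1 = s`. For `n ≥ 3`, once `|y_k| ≥ 2` the norm bound makes `|x_k|`
so small compared with `n |y_k|` that `|y_{k+1}| > |y_k|`, and `|y|` would grow without bound. For
`n ≤ 2` already `y_2 = -2ns - c_0` violates the bound when `|s| ≥ 2`.
-/

open Complex Filter Pointwise

/-- `piSum b d = ∑_{j≥1} d_j b^{-j}` (0-indexed: `d j` is the `(j+1)`-st digit). -/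
noncomputable def piSum (b : ℂ) (d : ℕ → ℤ) : ℂ :=
  ∑' j : ℕ, (d j : ℂ) * b ^ (-((j : ℤ) + 1))

/-- The `n`-th fundamental tile `T_n`. -/
def fundTile (n : ℕ) : Set ℂ :=
  {z | ∃ d : ℕ → ℤ, (∀ j, 0 ≤ d j ∧ d j ≤ (n : ℤ) ^ 2) ∧
    z = piSum (-(n : ℂ) + Complex.I) d}

section piSum

variable {b : ℂ} {N : ℤ} {c d : ℕ → ℤ}

lemma norm_piSum_term_le (hc : ∀ j, |c j| ≤ N) (j : ℕ) :
    ‖(c j : ℂ) * b ^ (-((j : ℤ) + 1))‖ ≤ N * ‖b‖⁻¹ * ‖b‖⁻¹ ^ j := by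
  rw [norm_mul, norm_intCast, norm_zpow, zpow_neg, ← inv_zpow, mul_assoc, ← pow_succ']
  exact_mod_cast mul_le_mul_of_nonneg_right (Int.cast_le.mpr (hc j)) (by positivity)

lemma hasSum_geometric_norm_inv (hb : 1 < ‖b‖) (N : ℝ) :
    HasSum (fun j : ℕ => N * ‖b‖⁻¹ * ‖b‖⁻¹ ^ j) (N / (‖b‖ - 1)) := by
  have h := (hasSum_geometric_of_lt_one (by positivity) (inv_lt_one_of_one_lt₀ hb)).mul_left
    (N * ‖b‖⁻¹)
  have : ‖b‖ - 1 ≠ 0 := by linarith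
  have : ‖b‖ ≠ 0 := by linarith
  rwa [show N * ‖b‖⁻¹ * (1 - ‖b‖⁻¹)⁻¹ = N / (‖b‖ - 1) by field_simp] at h

lemma summable_piSum (hb : 1 < ‖b‖) (hc : ∀ j, |c j| ≤ N) :
    Summable fun j : ℕ => (c j : ℂ) * b ^ (-((j : ℤ) + 1)) :=
  .of_norm_bounded (hasSum_geometric_norm_inv hb N).summable (norm_piSum_term_le hc)

lemma norm_piSum_le (hb : 1 < ‖b‖) (hc : ∀ j, |c j| ≤ N) : ‖piSum b c‖ ≤ N / (‖b‖ - 1) :=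
  tsum_of_norm_bounded (hasSum_geometric_norm_inv hb N) (norm_piSum_term_le hc)

lemma piSum_zero : piSum b 0 = 0 := by
  simp [piSum]

lemma piSum_neg : piSum b (-c) = -piSum b c := by
  simp [piSum, tsum_neg]

lemma piSum_sub (hb : 1 < ‖b‖) (hc : ∀ j, |c j| ≤ N) (hd : ∀ j, |d j| ≤ N) :
    piSum b (c - d) = piSum b c - piSum b d := by
  rw [piSum, piSum, piSum, ← (summable_piSum hb hc).tsum_sub (summable_piSum hb hd)]
  simp [sub_mul]

lemma piSum_tail (hb : 1 < ‖b‖) (hc : ∀ j, |c j| ≤ N) :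
    piSum b (fun j => c (j + 1)) = b * piSum b c - c 0 := by
  have hb0 : b ≠ 0 := norm_pos_iff.mp (by linarith)
  have hpow (j : ℕ) : b * b ^ (-(((j + 1 : ℕ) : ℤ) + 1)) = b ^ (-((j : ℤ) + 1)) := by
    rw [← zpow_one_add₀ hb0]; push_cast; ring_nf
  rw [piSum, piSum, (summable_piSum hb hc).tsum_eq_zero_add, mul_add, ← tsum_mul_left]
  simp only [mul_left_comm b, hpow]
  simp [hb0]

end piSum

def digitOrbit {R : Type*} [Ring R] (b : R) (c : ℕ → ℤ) (s : R) : ℕ → R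
  | 0 => s
  | k + 1 => b * digitOrbit b c s k - c k

lemma map_digitOrbit {R S : Type*} [Ring R] [Ring S] (f : R →+* S) (b : R) (c : ℕ → ℤ) (s : R)
    (k : ℕ) : f (digitOrbit b c s k) = digitOrbit (f b) c (f s) k := by
  induction k with
  | zero => rfl
  | succ k ih => simp [digitOrbit, ih]

section digitOrbit

variable {b : ℂ} {N : ℤ} {c : ℕ → ℤ}

lemma digitOrbit_piSum (hb : 1 < ‖b‖) (hc : ∀ j, |c j| ≤ N) (k : ℕ) :
    digitOrbit b c (piSum b c) k = piSum b (fun j => c (j + k)) := by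
  induction k with
  | zero => rfl
  | succ k ih =>
    have htail : piSum b (fun j => c (j + 1 + k)) = b * piSum b (fun j => c (j + k)) - c k := by
      simpa only [zero_add] using piSum_tail hb (c := fun j => c (j + k)) fun j => hc _
    rw [digitOrbit, ih, ← htail]
    simp only [add_right_comm _ 1 k, add_assoc]

lemma sum_range_add_zpow_mul_digitOrbit (hb : b ≠ 0) (s : ℂ) (k : ℕ) :
    ∑ j ∈ Finset.range k, (c j : ℂ) * b ^ (-((j : ℤ) + 1)) + b ^ (-(k : ℤ)) * digitOrbit b c s k
      = s := by
  induction k with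
  | zero => simp [digitOrbit]
  | succ k ih =>
    conv_rhs => rw [← ih]
    rw [Finset.sum_range_succ, digitOrbit, mul_sub, ← mul_assoc, ← zpow_add_one₀ hb]
    push_cast
    ring_nf

lemma piSum_eq_of_bounded_digitOrbit (hb : 1 < ‖b‖) (hc : ∀ j, |c j| ≤ N) {s : ℂ} {C : ℝ}
    (hC : ∀ k, ‖digitOrbit b c s k‖ ≤ C) : piSum b c = s := by
  have hb0 : b ≠ 0 := norm_pos_iff.mp (by linarith)
  have hvanish : Tendsto (fun k : ℕ => b ^ (-(k : ℤ)) * digitOrbit b c s k) atTop (nhds 0) := by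
    refine squeeze_zero_norm (fun k => ?_) (by simpa using (tendsto_pow_atTop_nhds_zero_of_lt_one
      (by positivity) (inv_lt_one_of_one_lt₀ hb)).const_mul C)
    rw [norm_mul, norm_zpow, zpow_neg, ← inv_zpow, zpow_natCast, mul_comm, ← inv_pow]
    exact mul_le_mul_of_nonneg_right (hC k) (by positivity)
  refine tendsto_nhds_unique (summable_piSum hb hc).hasSum.tendsto_sum_nat ?_
  have hpartial := hvanish.const_sub s
  rw [sub_zero] at hpartial
  exact hpartial.congr fun k => (eq_sub_of_add_eq (sum_range_add_zpow_mul_digitOrbit hb0 s k)).symm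

end digitOrbit

lemma norm_sq_base (n : ℕ) : ‖-(n : ℂ) + I‖ ^ 2 = n ^ 2 + 1 := by
  rw [Complex.sq_norm, Complex.normSq_apply]
  simp
  ring

lemma one_lt_norm_base {n : ℕ} (hn : 1 ≤ n) : 1 < ‖-(n : ℂ) + I‖ := by
  have : (1 : ℝ) ≤ n := by exact_mod_cast hn
  nlinarith [norm_sq_base n, norm_nonneg (-(n : ℂ) + I)]

lemma fundTile_inter_add_nonempty_iff {n : ℕ} (hn : 1 ≤ n) (s : ℂ) :
    (fundTile n ∩ (fundTile n + {s})).Nonempty ↔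
      ∃ c : ℕ → ℤ, (∀ j, |c j| ≤ (n : ℤ) ^ 2) ∧ piSum (-(n : ℂ) + I) c = s := by
  have hb := one_lt_norm_base hn
  have habs {d : ℕ → ℤ} (hd : ∀ j, 0 ≤ d j ∧ d j ≤ (n : ℤ) ^ 2) (j : ℕ) : |d j| ≤ (n : ℤ) ^ 2 :=
    abs_le.mpr ⟨by linarith [hd j, sq_nonneg (n : ℤ)], (hd j).2⟩
  constructor
  · rintro ⟨_, ⟨d, hd, rfl⟩, _, ⟨e, he, rfl⟩, _, rfl, hde⟩
    refine ⟨d - e, fun j => abs_sub_le_of_nonneg_of_le (hd j).1 (hd j).2 (he j).1 (he j).2, ?_⟩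
    rw [piSum_sub hb (habs hd) (habs he), ← hde, add_sub_cancel_left]
  · rintro ⟨c, hc, rfl⟩
    have hpart {d : ℕ → ℤ} (hd : ∀ j, 0 ≤ d j ∧ d j ≤ |c j|) : ∀ j, 0 ≤ d j ∧ d j ≤ (n : ℤ) ^ 2 :=
      fun j => ⟨(hd j).1, (hd j).2.trans (hc j)⟩
    have hpos := hpart (d := c⁺) fun j => ⟨posPart_nonneg (c j), by
      linarith [posPart_add_negPart (c j), negPart_nonneg (c j), Pi.posPart_apply c j]⟩
    have hneg := hpart (d := c⁻) fun j => ⟨negPart_nonneg (c j), by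
      linarith [posPart_add_negPart (c j), posPart_nonneg (c j), Pi.negPart_apply c j]⟩
    refine ⟨_, ⟨c⁺, hpos, rfl⟩, _, ⟨c⁻, hneg, rfl⟩, _, rfl, ?_⟩
    rw [eq_comm, ← sub_eq_iff_eq_add', ← piSum_sub hb (habs hpos) (habs hneg),
      posPart_sub_negPart]

lemma toComplex_base (n : ℤ) : GaussianInt.toComplex ⟨-n, 1⟩ = -(n : ℂ) + I := by
  simp [GaussianInt.toComplex_def']

lemma norm_digitOrbit_le {n : ℕ} (hn : 1 ≤ n) {c : ℕ → ℤ} (hc : ∀ j, |c j| ≤ (n : ℤ) ^ 2) {s : ℤ}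
    (hs : piSum (-(n : ℂ) + I) c = s) (k : ℕ) :
    (digitOrbit (⟨-n, 1⟩ : GaussianInt) c s k).norm ≤ n ^ 2 + 2 * n + 3 := by
  have hb := one_lt_norm_base hn
  have hb2 := norm_sq_base n
  set b : ℂ := -(n : ℂ) + I
  have hbn : ‖b‖ < n + 1 := by nlinarith [norm_nonneg b]
  have hcomplex : GaussianInt.toComplex (digitOrbit ⟨-n, 1⟩ c s k) = piSum b fun j => c (j + k) := by
    rw [map_digitOrbit, toComplex_base, Int.cast_natCast, map_intCast, ← hs, digitOrbit_piSum hb hc]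
  have hnorm : ‖piSum b fun j => c (j + k)‖ ≤ ‖b‖ + 1 := by
    convert norm_piSum_le hb fun j => hc (j + k) using 1
    rw [eq_div_iff (by linarith)]
    push_cast
    linear_combination hb2
  have hreal : ((digitOrbit (⟨-n, 1⟩ : GaussianInt) c s k).norm : ℝ) < n ^ 2 + 2 * n + 4 := by
    rw [GaussianInt.intCast_real_norm, ← Complex.sq_norm, hcomplex]
    nlinarith [norm_nonneg (piSum b fun j => c (j + k))]
  have : (digitOrbit (⟨-n, 1⟩ : GaussianInt) c s k).norm < n ^ 2 + 2 * n + 4 := by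
    exact_mod_cast hreal
  omega

lemma abs_lt_abs_sub_mul {n x y : ℤ} (hn : 3 ≤ n) (hxy : x ^ 2 + y ^ 2 ≤ n ^ 2 + 2 * n + 3)
    (hy : 2 ≤ |y|) : |y| < |x - n * y| := by
  by_contra! h
  have hx : (n - 1) * |y| ≤ |x| := by
    have := abs_sub_abs_le_abs_sub (n * y) x
    rw [abs_mul, abs_of_nonneg (by omega : 0 ≤ n), abs_sub_comm] at this
    linarith
  have hx2 : ((n - 1) * |y|) ^ 2 ≤ x ^ 2 := by
    rw [← sq_abs x]
    exact pow_le_pow_left₀ (by nlinarith) hx 2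
  nlinarith [sq_abs y, mul_nonneg (by nlinarith : (0 : ℤ) ≤ n ^ 2 - 2 * n + 2)
    (by nlinarith : (0 : ℤ) ≤ |y| ^ 2 - 4), mul_nonneg (by omega : (0 : ℤ) ≤ n - 3)
    (by omega : (0 : ℤ) ≤ 3 * n - 1)]

lemma abs_le_one_of_forall_sq_add_sq_le {n : ℤ} (hn : 3 ≤ n) {x y : ℕ → ℤ}
    (hy : ∀ k, y (k + 1) = x k - n * y k) (hB : ∀ k, x k ^ 2 + y k ^ 2 ≤ n ^ 2 + 2 * n + 3)
    (k : ℕ) : |y k| ≤ 1 := by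
  by_contra! hk
  have hgrow (j : ℕ) : (j : ℤ) + 2 ≤ |y (k + j)| := by
    induction j with
    | zero => simpa using (by omega : (2 : ℤ) ≤ |y k|)
    | succ j ih =>
      have := abs_lt_abs_sub_mul hn (hB (k + j)) (by omega)
      rw [← add_assoc, hy]
      push_cast
      omega
  have hlt : |y (k + n.toNat)| < n + 2 :=
    abs_lt_of_sq_lt_sq (by nlinarith [hB (k + n.toNat), sq_nonneg (x (k + n.toNat))]) (by omega)
  have := hgrow n.toNat
  omega

lemma abs_le_one_of_norm_digitOrbit_le {n : ℤ} (hn : 1 ≤ n) {c : ℕ → ℤ}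
    (hc : ∀ j, |c j| ≤ n ^ 2) {s : ℤ}
    (hB : ∀ k, (digitOrbit (⟨-n, 1⟩ : GaussianInt) c s k).norm ≤ n ^ 2 + 2 * n + 3) :
    |s| ≤ 1 := by
  set w := digitOrbit (⟨-n, 1⟩ : GaussianInt) c s
  have him (k : ℕ) : (w (k + 1)).im = (w k).re - n * (w k).im := by
    simp [w, digitOrbit]
    ring
  have hB' (k : ℕ) : (w k).re ^ 2 + (w k).im ^ 2 ≤ n ^ 2 + 2 * n + 3 := by
    simpa [Zsqrtd.norm_def, sq] using hB k
  have hw1 : (w 1).im = s := by simp [w, digitOrbit]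
  rcases le_or_gt n 2 with hn2 | hn3
  · have hw2 : (w 2).im = -2 * n * s - c 0 := by
      simp [w, digitOrbit]
      ring
    have hlt : |(w 2).im| < n + 2 :=
      abs_lt_of_sq_lt_sq (by nlinarith [hB' 2, sq_nonneg (w 2).re]) (by omega)
    have hc0 := abs_le.mp (hc 0)
    rw [hw2, abs_lt] at hlt
    rw [abs_le]
    interval_cases n <;> omega
  · exact hw1 ▸ abs_le_one_of_forall_sq_add_sq_le hn3 him hB' 1

/-- The orbit of `1` under the digits `1 - 2n, -a, a, -a, …` with `a = (n - 1)^2 + 1` is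
`1, w, -w, w, …` for `w = n - 1 + i`, since `(b + 1) w = -a`. -/
lemma exists_piSum_eq_one {n : ℕ} (hn : 1 ≤ n) :
    ∃ c : ℕ → ℤ, (∀ j, |c j| ≤ (n : ℤ) ^ 2) ∧ piSum (-(n : ℂ) + I) c = 1 := by
  set a : ℤ := (n - 1) ^ 2 + 1
  set w : ℂ := (n - 1 : ℂ) + I
  let c : ℕ → ℤ
    | 0 => 1 - 2 * n
    | k + 1 => (-1) ^ (k + 1) * a
  have hc : ∀ j, |c j| ≤ (n : ℤ) ^ 2 := by
    rintro (_ | k)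
    · simp only [c]
      rw [abs_le]
      constructor <;> nlinarith
    · simp only [c, abs_mul, abs_pow, abs_neg, abs_one, one_pow, one_mul, a]
      rw [abs_of_nonneg (by positivity)]
      nlinarith
  have horbit (k : ℕ) : digitOrbit (-(n : ℂ) + I) c 1 (k + 1) = (-1) ^ k * w := by
    induction k with
    | zero =>
      simp [digitOrbit, c, w]
      ring
    | succ k ih =>
      rw [digitOrbit, ih]
      simp only [c, a, w]
      push_cast
      linear_combination (-1 : ℂ) ^ k * I_sq
  refine ⟨c, hc, piSum_eq_of_bounded_digitOrbit (one_lt_norm_base hn) hc (C := 1 + ‖w‖) ?_⟩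
  rintro (_ | k)
  · simp [digitOrbit]
  · simp [horbit]

theorem stmt_1 (n : ℕ) (hn : 1 ≤ n) (s : ℤ) :
    (fundTile n ∩ (fundTile n + {(s : ℂ)})).Nonempty ↔ s ∈ ({-1, 0, 1} : Set ℤ) := by
  rw [fundTile_inter_add_nonempty_iff hn]
  constructor
  · rintro ⟨c, hc, hs⟩
    have := abs_le_one_of_norm_digitOrbit_le (by exact_mod_cast hn) hc (norm_digitOrbit_le hn hc hs)
    simp only [Set.mem_insert_iff, Set.mem_singleton_iff]
    rw [abs_le] at this
    omega
  · obtain ⟨c, hc, h1⟩ := exists_piSum_eq_one hn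
    rintro (rfl | rfl | rfl)
    · exact ⟨-c, fun j => by simpa using hc j, by simp [piSum_neg, h1]⟩
    · exact ⟨0, fun j => by positivity, by simp [piSum_zero]⟩
    · exact ⟨c, hc, by simpa using h1⟩
end

section
/- Fix an integer n ≥ 2 and set b := -n + i. If s is a Gaussian integer with T_n ∩ (T_n + s) ≠ ∅, then there exists an integer δ with |δ| ≤ n² such that T_n ∩ (T_n + (b·s + δ)) ≠ ∅; that is, b·s + δ is again a neighbour of T_n. -/
open Complex Filter Pointwise

/-!
Multiplying by the base shifts digit expansions: `b · π(d₀ d₁ d₂ …) = d₀ + π(d₁ d₂ …)`,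
hence `b · T_n ⊆ {0, …, n²} + T_n`. If `a` and `a + s` lie in `T_n`, this gives digits `k, k'` with
`b (a + s) - k ∈ T_n` and `b a - k' ∈ T_n`; these two points differ by `b s + (k' - k)`, and
`|k' - k| ≤ n²`.
-/

lemma summable_digit_series {b : ℂ} (hb : 1 < ‖b‖) {d : ℕ → ℤ} {C : ℝ}
    (hC : ∀ j, |(d j : ℝ)| ≤ C) :
    Summable (fun j : ℕ => (d j : ℂ) * b ^ (-((j : ℤ) + 1))) := by
  have hr : ‖b‖⁻¹ < 1 := inv_lt_one_of_one_lt₀ hb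
  refine Summable.of_norm_bounded
    ((summable_geometric_of_lt_one (by positivity) hr).mul_left (C * ‖b‖⁻¹)) fun j => ?_
  rw [norm_mul, norm_intCast, norm_zpow, zpow_neg, ← inv_zpow]
  calc |(d j : ℝ)| * ‖b‖⁻¹ ^ ((j : ℤ) + 1)
      ≤ C * ‖b‖⁻¹ ^ ((j : ℤ) + 1) := by gcongr; exact hC j
    _ = C * ‖b‖⁻¹ * ‖b‖⁻¹ ^ j := by rw [zpow_add_one₀ (by positivity)]; norm_cast; ring

lemma mul_piSum {b : ℂ} (hb : 1 < ‖b‖) {d : ℕ → ℤ} {C : ℝ} (hC : ∀ j, |(d j : ℝ)| ≤ C) :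
    b * piSum b d = (d 0 : ℂ) + piSum b (fun j => d (j + 1)) := by
  have hb0 : b ≠ 0 := norm_pos_iff.mp (one_pos.trans hb)
  have hterm : ∀ j : ℕ, b * ((d j : ℂ) * b ^ (-((j : ℤ) + 1))) = (d j : ℂ) * b ^ (-(j : ℤ)) := by
    intro j
    rw [neg_add, zpow_add₀ hb0, zpow_neg_one]
    field_simp
  have hsum := (summable_digit_series hb hC).mul_left b
  simp only [hterm] at hsum
  rw [piSum, ← (summable_digit_series hb hC).tsum_mul_left]
  simp only [hterm]
  rw [hsum.tsum_eq_zero_add, piSum]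
  push_cast
  simp

lemma exists_digit_mul_sub_mem_fundTile {n : ℕ} (hn : 1 ≤ n) {z : ℂ} (hz : z ∈ fundTile n) :
    ∃ k : ℤ, 0 ≤ k ∧ k ≤ (n : ℤ) ^ 2 ∧ (-(n : ℂ) + I) * z - k ∈ fundTile n := by
  obtain ⟨d, hd, rfl⟩ := hz
  have hC : ∀ j, |(d j : ℝ)| ≤ (n : ℝ) ^ 2 := fun j => by
    rw [abs_of_nonneg (by exact_mod_cast (hd j).1)]; exact_mod_cast (hd j).2
  refine ⟨d 0, (hd 0).1, (hd 0).2, fun j => d (j + 1), fun j => hd (j + 1), ?_⟩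
  rw [mul_piSum (one_lt_norm_base hn) hC]
  ring

theorem stmt_3_general (n : ℕ) (hn : 2 ≤ n) (s : ℂ)
    (hnbr : (fundTile n ∩ (fundTile n + {s})).Nonempty) :
    ∃ δ : ℤ, |δ| ≤ (n : ℤ) ^ 2 ∧
      (fundTile n ∩ (fundTile n + {(-(n : ℂ) + Complex.I) * s + (δ : ℂ)})).Nonempty := by
  obtain ⟨z, hz, a, ha, _, rfl, rfl⟩ := hnbr
  obtain ⟨k, hk0, hkn, hbz⟩ := exists_digit_mul_sub_mem_fundTile (by omega) hz
  obtain ⟨k', hk0', hkn', hba⟩ := exists_digit_mul_sub_mem_fundTile (by omega) ha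
  refine ⟨k' - k, abs_sub_le_iff.mpr ⟨by omega, by omega⟩, _, hbz, _, hba, _, rfl, ?_⟩
  push_cast
  ring

theorem stmt_3 (n : ℕ) (hn : 2 ≤ n) (s : ℂ)
    (hs : ∃ p q : ℤ, s = (p : ℂ) + (q : ℂ) * Complex.I)
    (hnbr : (fundTile n ∩ (fundTile n + {s})).Nonempty) :
    ∃ δ : ℤ, |δ| ≤ (n : ℤ) ^ 2 ∧
      (fundTile n ∩ (fundTile n + {(-(n : ℂ) + Complex.I) * s + (δ : ℂ)})).Nonempty :=
  stmt_3_general n hn s hnbr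
end

section
/- Fix an integer n ≥ 2 and set b := -n + i. Let D ⊆ {0, 1, …, ⌊n²/2⌋} satisfy |δ − δ'| ≠ 1 for all δ, δ' ∈ Δ := D − D. Let (α_j)_{j≥1} be a sequence with α_j ∈ Δ for all j, set α := π((α_j)), and let C(α) := C_{n,D} ∩ (C_{n,D} + α). Then for every k ≥ 1: (a) for every tuple (d_1, …, d_k) with d_j ∈ D ∩ (D + α_j) for each j, the k-tile T_{d_1…d_k} intersects C(α); and (b) C(α) is contained in the union of the k-tiles T_{d_1…d_k} over all tuples (d_1, …, d_k) with d_j ∈ D ∩ (D + α_j) for each j. -/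
/-!
If `z = π(e) = π(f) + π(α)` with digits `e_j, f_j ∈ D`, then `c := e - f - α` has digits in
`[-n², n²]`, none equal to `±1` (by the separation of `Δ`), and `π(c) = 0`. The tails
`T_N := π(c_N, c_{N+1}, …)` satisfy `T_{N+1} = b T_N - c_N` and lie in the disc of radius
`n² / (|b| - 1) = |b| + 1`. If `T_N = 0` but `c_N ≠ 0`, then `|c_N| ≥ 2` and the next tails are
Gaussian integers which cannot all stay in that disc; so all tails and all digits of `c` vanish,
i.e. `e_j ∈ D ∩ (D + α_j)`. Since `π(e)` lies in the `k`-tile of its first `k` digits, this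
gives (b), and (a) follows by extending the given digits to a full sequence in `D ∩ (D + α_j)`.
-/

open Complex Filter Pointwise

/-- The restricted digit set `C_{n,D}`. -/
def restrictedDigitSet (n : ℕ) (D : Set ℤ) : Set ℂ :=
  {z | ∃ d : ℕ → ℤ, (∀ j, d j ∈ D) ∧ z = piSum (-(n : ℂ) + Complex.I) d}

/-- The `k`-tile of a set `T` with digits `d_1, …, d_k` (0-indexed). -/
def kTile (b : ℂ) (T : Set ℂ) (k : ℕ) (d : Fin k → ℤ) : Set ℂ :=
  {z | ∃ t ∈ T, z = (∑ j : Fin k, (d j : ℂ) * b ^ (-((j : ℤ) + 1))) + b ^ (-(k : ℤ)) * t}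

lemma zpow_neg_natCast_add_one (b : ℂ) (j : ℕ) : b ^ (-((j : ℤ) + 1)) = b⁻¹ ^ (j + 1) := by
  rw [← inv_zpow', ← Nat.cast_succ, zpow_natCast]

lemma hasSum_mul_inv_mul_inv_pow {x : ℝ} (hx : 1 < x) (M : ℝ) :
    HasSum (fun j : ℕ => M * x⁻¹ * x⁻¹ ^ j) (M / (x - 1)) := by
  have hx1 : x - 1 ≠ 0 := by linarith
  have h := (hasSum_geometric_of_lt_one (by positivity) (inv_lt_one_of_one_lt₀ hx)).mul_left
    (M * x⁻¹)
  rwa [show M * x⁻¹ * (1 - x⁻¹)⁻¹ = M / (x - 1) by field_simp] at h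

namespace piSum

variable {b : ℂ} {c c' : ℕ → ℤ} {M M' : ℤ}

lemma norm_term_le (hc : ∀ j, |c j| ≤ M) (j : ℕ) :
    ‖(c j : ℂ) * b ^ (-((j : ℤ) + 1))‖ ≤ M * ‖b‖⁻¹ * ‖b‖⁻¹ ^ j := by
  rw [norm_mul, zpow_neg_natCast_add_one, norm_pow, norm_inv, norm_intCast, pow_succ', ← mul_assoc]
  gcongr
  exact_mod_cast hc j

lemma summable (hb : 1 < ‖b‖) (hc : ∀ j, |c j| ≤ M) :
    Summable (fun j : ℕ => (c j : ℂ) * b ^ (-((j : ℤ) + 1))) :=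
  .of_norm_bounded (hasSum_mul_inv_mul_inv_pow hb M).summable (norm_term_le hc)

lemma norm_le (hb : 1 < ‖b‖) (hc : ∀ j, |c j| ≤ M) : ‖piSum b c‖ ≤ M / (‖b‖ - 1) :=
  tsum_of_norm_bounded (hasSum_mul_inv_mul_inv_pow hb M) (norm_term_le hc)

lemma sub (hb : 1 < ‖b‖) (hc : ∀ j, |c j| ≤ M) (hc' : ∀ j, |c' j| ≤ M') :
    piSum b (c - c') = piSum b c - piSum b c' := by
  rw [piSum, piSum, piSum, ← (summable hb hc).tsum_sub (summable hb hc')]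
  congr 1 with j
  push_cast [Pi.sub_apply]
  ring

lemma eq_sum_add_tail (hb : 1 < ‖b‖) (hc : ∀ j, |c j| ≤ M) (k : ℕ) :
    piSum b c = ∑ j ∈ Finset.range k, (c j : ℂ) * b ^ (-((j : ℤ) + 1))
      + b ^ (-(k : ℤ)) * piSum b (fun j => c (j + k)) := by
  have hb0 : b ≠ 0 := norm_pos_iff.1 (one_pos.trans hb)
  rw [piSum, ← (summable hb hc).sum_add_tsum_nat_add k, piSum, ← tsum_mul_left]
  congr 2 with j
  rw [mul_left_comm, ← zpow_add₀ hb0]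
  push_cast
  ring_nf

lemma tail_succ (hb : 1 < ‖b‖) (hc : ∀ j, |c j| ≤ M) (N : ℕ) :
    piSum b (fun j => c (j + (N + 1))) = b * piSum b (fun j => c (j + N)) - c N := by
  have hb0 : b ≠ 0 := norm_pos_iff.1 (one_pos.trans hb)
  rw [eq_sum_add_tail hb (fun j => hc (j + N)) 1]
  simp only [Finset.sum_range_one, Nat.cast_zero, zero_add, Nat.cast_one, add_assoc, add_comm 1 N]
  field_simp
  ring

lemma mem_kTile {T : Set ℂ} (hb : 1 < ‖b‖)
    (hc : ∀ j, |c j| ≤ M) (k : ℕ) (hT : piSum b (fun j => c (j + k)) ∈ T) :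
    piSum b c ∈ kTile b T k (fun j => c j) :=
  ⟨_, hT, by rw [eq_sum_add_tail hb hc k, Fin.sum_univ_eq_sum_range
    (fun j => (c j : ℂ) * b ^ (-((j : ℤ) + 1)))]⟩

end piSum

lemma norm_sq_piSum_base_lt {n : ℕ} (hn : 1 ≤ n) {c : ℕ → ℤ} (hc : ∀ j, |c j| ≤ (n : ℤ) ^ 2) :
    ‖piSum (-(n : ℂ) + I) c‖ ^ 2 < n ^ 2 + 2 * n + 3 := by
  have hb := one_lt_norm_base hn
  have hb2 := norm_sq_base n
  have hn' : (1 : ℝ) ≤ n := by exact_mod_cast hn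
  have hle : ‖piSum (-(n : ℂ) + I) c‖ ≤ ‖-(n : ℂ) + I‖ + 1 := by
    have h := piSum.norm_le hb hc
    rwa [show (((n : ℤ) ^ 2 : ℤ) : ℝ) = (‖-(n : ℂ) + I‖ - 1) * (‖-(n : ℂ) + I‖ + 1) by
      push_cast; linear_combination -hb2, mul_div_cancel_left₀ _ (by linarith)] at h
  have hbn : ‖-(n : ℂ) + I‖ < n + 1 / 2 := by nlinarith
  calc ‖piSum (-(n : ℂ) + I) c‖ ^ 2 ≤ (‖-(n : ℂ) + I‖ + 1) ^ 2 := by gcongr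
    _ < (n : ℝ) ^ 2 + 2 * n + 3 := by nlinarith

lemma sq_add_sq_le_of_norm_sq_lt {x y R : ℤ} (h : ‖(x : ℂ) + y * I‖ ^ 2 < R + 1) :
    x ^ 2 + y ^ 2 ≤ R := by
  have h' : ((x ^ 2 + y ^ 2 : ℤ) : ℝ) < ((R + 1 : ℤ) : ℝ) := by
    rw [Complex.sq_norm, show (x : ℂ) = ((x : ℝ) : ℂ) by simp, show (y : ℂ) = ((y : ℝ) : ℂ) by simp,
      normSq_add_mul_I] at h
    push_cast
    exact h
  have := Int.cast_lt.1 h'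
  omega

lemma false_of_tail_bounds_of_two_le {n s x y : ℤ} (hn : 2 ≤ n) (hs : 2 ≤ s)
    (hx : |n * s - x| ≤ n ^ 2)
    (h₂ : x ^ 2 + s ^ 2 ≤ n ^ 2 + 2 * n + 2) (h₃ : (x + n * s) ^ 2 + y ^ 2 ≤ n ^ 2 + 2 * n + 2)
    (h₄ : (y - n * (x + n * s)) ^ 2 ≤ n ^ 2 + 2 * n + 2) : False := by
  have hx' : |x| < n + 1 := abs_lt_of_sq_lt_sq (by nlinarith) (by omega)
  have hxs : |x + n * s| < n + 2 := abs_lt_of_sq_lt_sq (by nlinarith) (by omega)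
  rw [abs_lt] at hx' hxs
  obtain rfl : s = 2 := by nlinarith
  obtain rfl | rfl : x = -n ∨ x = -n + 1 := by omega
  · have h3n : 3 ≤ n := by
      rw [abs_le] at hx
      nlinarith
    have hy : |y| < n := abs_lt_of_sq_lt_sq (by nlinarith) (by omega)
    rw [abs_lt] at hy
    have hgap : 2 * n + 1 ≤ n ^ 2 - y := by nlinarith
    nlinarith
  · have hy : |y| < 2 := abs_lt_of_sq_lt_sq (by nlinarith) (by omega)
    rw [abs_lt] at hy
    nlinarith

/-- With `T_N = 0` and `s = c_N`, the tails `T_{N+1}, T_{N+2}, T_{N+3}` are `-s`, `x - s i`,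
`y + (x + n s) i` for integers `x, y`, and `y - n (x + n s)` is the imaginary part of `T_{N+4}`;
all lie in the disc `|z|² ≤ n² + 2n + 2`. -/
lemma false_of_tail_bounds {n s x y : ℤ} (hn : 2 ≤ n) (hs : 2 ≤ |s|) (hx : |n * s - x| ≤ n ^ 2)
    (h₂ : x ^ 2 + s ^ 2 ≤ n ^ 2 + 2 * n + 2) (h₃ : (x + n * s) ^ 2 + y ^ 2 ≤ n ^ 2 + 2 * n + 2)
    (h₄ : (y - n * (x + n * s)) ^ 2 ≤ n ^ 2 + 2 * n + 2) : False := by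
  rcases le_abs'.1 hs with hs | hs
  · refine false_of_tail_bounds_of_two_le (s := -s) (x := -x) (y := -y) hn (by omega) ?_ ?_ ?_ ?_
    · rwa [← abs_neg, show -(n * -s - -x) = n * s - x by ring]
    · linear_combination h₂
    · linear_combination h₃
    · linear_combination h₄
  · exact false_of_tail_bounds_of_two_le hn hs hx h₂ h₃ h₄

lemma head_eq_zero_of_piSum_base_eq_zero {n : ℕ} (hn : 2 ≤ n) {c : ℕ → ℤ}
    (hbd : ∀ j, |c j| ≤ (n : ℤ) ^ 2) (hne : ∀ j, |c j| ≠ 1) (h : piSum (-(n : ℂ) + I) c = 0) :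
    c 0 = 0 := by
  have hb := one_lt_norm_base (n := n) (by omega)
  set T : ℕ → ℂ := fun N => piSum (-(n : ℂ) + I) (fun j => c (j + N))
  have hT (N : ℕ) : T (N + 1) = (-(n : ℂ) + I) * T N - c N := piSum.tail_succ hb hbd N
  have hTb (N : ℕ) (x y : ℤ) (hN : T N = x + y * I) : x ^ 2 + y ^ 2 ≤ (n : ℤ) ^ 2 + 2 * n + 2 := by
    have := norm_sq_piSum_base_lt (n := n) (by omega) (fun j => hbd (j + N))
    refine sq_add_sq_le_of_norm_sq_lt ?_
    rw [← hN]
    push_cast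
    linarith
  by_contra hs
  have hs2 : 2 ≤ |c 0| := by
    have := abs_pos.2 hs
    have := hne 0
    omega
  set s := c 0
  set x := (n : ℤ) * s - c 1 with hx
  set y := -(n : ℤ) * x + s - c 2 with hy
  have h2 : T 2 = x + (-s : ℤ) * I := by
    rw [hT, hT, show T 0 = 0 by simpa [T] using h, hx]
    push_cast
    ring
  have h3 : T 3 = y + (x + n * s : ℤ) * I := by
    rw [hT, h2, hy]
    push_cast
    linear_combination (-(s : ℂ)) * I_sq
  have h4 : T 4 = (-n * y - (x + n * s) - c 3 : ℤ) + (y - n * (x + n * s) : ℤ) * I := by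
    rw [hT, h3]
    push_cast
    linear_combination ((x : ℂ) + n * s) * I_sq
  refine false_of_tail_bounds (n := n) (x := x) (y := y) (by omega) hs2 ?_
    (by simpa using hTb _ x (-s) h2) (by linarith [hTb _ _ _ h3]) (by nlinarith [hTb _ _ _ h4])
  simpa [hx] using hbd 1

lemma eq_zero_of_piSum_base_eq_zero {n : ℕ} (hn : 2 ≤ n) {c : ℕ → ℤ}
    (hbd : ∀ j, |c j| ≤ (n : ℤ) ^ 2) (hne : ∀ j, |c j| ≠ 1) (h : piSum (-(n : ℂ) + I) c = 0) :
    c = 0 := by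
  have hhead (N : ℕ) (hN : piSum (-(n : ℂ) + I) (fun j => c (j + N)) = 0) : c N = 0 := by
    simpa using
      head_eq_zero_of_piSum_base_eq_zero hn (fun j => hbd (j + N)) (fun j => hne (j + N)) hN
  have htail (N : ℕ) : piSum (-(n : ℂ) + I) (fun j => c (j + N)) = 0 := by
    induction N with
    | zero => simpa using h
    | succ N ih => rw [piSum.tail_succ (one_lt_norm_base (by omega)) hbd, ih, hhead N ih]; simp
  exact funext fun N => hhead N (htail N)

lemma exists_extend_fin {β : Type*} {S : ℕ → Set β} (hS : ∀ j, (S j).Nonempty) {k : ℕ}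
    (d : Fin k → β) (hd : ∀ j : Fin k, d j ∈ S j) :
    ∃ e : ℕ → β, (∀ j, e j ∈ S j) ∧ (fun j : Fin k => e j) = d := by
  choose w hw using hS
  refine ⟨fun j => if h : j < k then d ⟨j, h⟩ else w j, fun j => ?_, funext fun j => dif_pos j.isLt⟩
  dsimp only
  split_ifs with h
  exacts [hd ⟨j, h⟩, hw j]

lemma mem_add_singleton_iff {D : Set ℤ} {a x : ℤ} : x ∈ D + {a} ↔ x - a ∈ D := by
  simp [Set.add_singleton, sub_eq_add_neg]

lemma inter_add_singleton_nonempty {D : Set ℤ} {a : ℤ} (ha : a ∈ D - D) :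
    (D ∩ (D + {a})).Nonempty := by
  obtain ⟨p, hp, q, hq, rfl⟩ := ha
  exact ⟨p, hp, mem_add_singleton_iff.2 (by rwa [sub_sub_cancel])⟩

section DigitSet

variable {n : ℕ} {D : Set ℤ} {α e : ℕ → ℤ}

lemma piSum_mem_kTile_fundTile (hn : 1 ≤ n) (hD : D ⊆ Set.Icc 0 ((n : ℤ) ^ 2 / 2))
    (he : ∀ j, e j ∈ D) (k : ℕ) :
    piSum (-(n : ℂ) + I) e ∈ kTile (-(n : ℂ) + I) (fundTile n) k (fun j => e j) := by
  have hbd (j : ℕ) : 0 ≤ e j ∧ e j ≤ (n : ℤ) ^ 2 := by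
    have := hD (he j)
    rw [Set.mem_Icc] at this
    omega
  exact piSum.mem_kTile (one_lt_norm_base hn) (fun j => abs_le.2 ⟨by linarith [hbd j], (hbd j).2⟩) k
    ⟨_, fun j => hbd (j + k), rfl⟩

lemma piSum_mem_inter_add (hn : 1 ≤ n) (hD : D ⊆ Set.Icc 0 ((n : ℤ) ^ 2 / 2))
    (he : ∀ j, e j ∈ D ∩ (D + {α j})) :
    piSum (-(n : ℂ) + I) e ∈ restrictedDigitSet n D ∩
      (restrictedDigitSet n D + {piSum (-(n : ℂ) + I) α}) := by
  have hbd (j : ℕ) : |e j| ≤ (n : ℤ) ^ 2 ∧ |α j| ≤ (n : ℤ) ^ 2 := by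
    have h₁ := hD (he j).1
    have h₂ := hD (mem_add_singleton_iff.1 (he j).2)
    rw [Set.mem_Icc] at h₁ h₂
    rw [abs_le, abs_le]
    omega
  refine ⟨⟨e, fun j => (he j).1, rfl⟩, _, ⟨e - α, fun j => mem_add_singleton_iff.1 (he j).2, rfl⟩,
    _, rfl, ?_⟩
  rw [piSum.sub (one_lt_norm_base hn) (fun j => (hbd j).1) (fun j => (hbd j).2)]
  exact sub_add_cancel _ _

lemma exists_digits_of_mem_inter_add (hn : 2 ≤ n) (hD : D ⊆ Set.Icc 0 ((n : ℤ) ^ 2 / 2))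
    (hsep : ∀ δ ∈ D - D, ∀ δ' ∈ D - D, |δ - δ'| ≠ 1) (hα : ∀ j, α j ∈ D - D) {z : ℂ}
    (hz : z ∈ restrictedDigitSet n D ∩ (restrictedDigitSet n D + {piSum (-(n : ℂ) + I) α})) :
    ∃ e : ℕ → ℤ, (∀ j, e j ∈ D ∩ (D + {α j})) ∧ z = piSum (-(n : ℂ) + I) e := by
  obtain ⟨⟨e, he, rfl⟩, _, ⟨f, hf, rfl⟩, _, rfl, hsum⟩ := hz
  have hbd (j : ℕ) : |e j| ≤ (n : ℤ) ^ 2 ∧ |f j| ≤ (n : ℤ) ^ 2 ∧ |α j| ≤ (n : ℤ) ^ 2 ∧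
      |e j - f j - α j| ≤ (n : ℤ) ^ 2 := by
    obtain ⟨p, hp, q, hq, hpq⟩ := hα j
    have := hD (he j)
    have := hD (hf j)
    have := hD hp
    have := hD hq
    simp only [Set.mem_Icc] at *
    simp only [abs_le]
    omega
  have hb := one_lt_norm_base (n := n) (by omega)
  have hzero : e - f - α = 0 := by
    refine eq_zero_of_piSum_base_eq_zero hn (fun j => (hbd j).2.2.2)
      (fun j => hsep _ ⟨e j, he j, f j, hf j, rfl⟩ _ (hα j)) ?_
    rw [piSum.sub hb (M := 2 * (n : ℤ) ^ 2)
      (fun j => by rw [Pi.sub_apply]; linarith [abs_sub (e j) (f j), hbd j])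
      (fun j => (hbd j).2.2.1), piSum.sub hb (fun j => (hbd j).1) (fun j => (hbd j).2.1), ← hsum]
    ring
  refine ⟨e, fun j => ⟨he j, mem_add_singleton_iff.2 ?_⟩, rfl⟩
  have := congrFun hzero j
  simp only [Pi.sub_apply, Pi.zero_apply] at this
  rw [show e j - α j = f j by linarith]
  exact hf j

end DigitSet

theorem stmt_7_general (n : ℕ) (hn : 2 ≤ n) (D : Set ℤ)
    (hD : D ⊆ Set.Icc 0 ((n : ℤ) ^ 2 / 2))
    (hsep : ∀ δ ∈ D - D, ∀ δ' ∈ D - D, |δ - δ'| ≠ 1)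
    (α : ℕ → ℤ) (hα : ∀ j, α j ∈ D - D)
    (Cα : Set ℂ)
    (hCα : Cα = restrictedDigitSet n D ∩ (restrictedDigitSet n D + {piSum (-(n : ℂ) + Complex.I) α}))
    (k : ℕ) :
    (∀ d : Fin k → ℤ, (∀ j : Fin k, d j ∈ D ∩ (D + {α (j : ℕ)})) →
        (kTile (-(n : ℂ) + Complex.I) (fundTile n) k d ∩ Cα).Nonempty) ∧
      Cα ⊆ ⋃ d : Fin k → ℤ, ⋃ (_ : ∀ j : Fin k, d j ∈ D ∩ (D + {α (j : ℕ)})),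
        kTile (-(n : ℂ) + Complex.I) (fundTile n) k d := by
  subst hCα
  refine ⟨fun d hd => ?_, fun z hz => ?_⟩
  · obtain ⟨e, he, rfl⟩ := exists_extend_fin (fun j => inter_add_singleton_nonempty (hα j)) d hd
    exact ⟨_, piSum_mem_kTile_fundTile (by omega) hD (fun j => (he j).1) k,
      piSum_mem_inter_add (by omega) hD he⟩
  · obtain ⟨e, he, rfl⟩ := exists_digits_of_mem_inter_add hn hD hsep hα hz
    exact Set.mem_iUnion₂.2
      ⟨_, fun j => he j, piSum_mem_kTile_fundTile (by omega) hD (fun j => (he j).1) k⟩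

theorem stmt_7 (n : ℕ) (hn : 2 ≤ n) (D : Set ℤ)
    (hD : D ⊆ Set.Icc 0 ((n : ℤ) ^ 2 / 2))
    (hsep : ∀ δ ∈ D - D, ∀ δ' ∈ D - D, |δ - δ'| ≠ 1)
    (α : ℕ → ℤ) (hα : ∀ j, α j ∈ D - D)
    (Cα : Set ℂ)
    (hCα : Cα = restrictedDigitSet n D ∩ (restrictedDigitSet n D + {piSum (-(n : ℂ) + Complex.I) α}))
    (k : ℕ) (hk : 1 ≤ k) :
    (∀ d : Fin k → ℤ, (∀ j : Fin k, d j ∈ D ∩ (D + {α (j : ℕ)})) →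
        (kTile (-(n : ℂ) + Complex.I) (fundTile n) k d ∩ Cα).Nonempty) ∧
      Cα ⊆ ⋃ d : Fin k → ℤ, ⋃ (_ : ∀ j : Fin k, d j ∈ D ∩ (D + {α (j : ℕ)})),
        kTile (-(n : ℂ) + Complex.I) (fundTile n) k d :=
  stmt_7_general n hn D hD hsep α hα Cα hCα k
end

section
/- Let (a_j)_{j≥1} be a bounded sequence of nonnegative integers. If there exists a positive integer q such that a_j ≤ a_{j+q} for all j ≥ 1, then (a_j)_{j≥1} is strongly eventually periodic (SEP). -/
/-- A sequence `(a_j)_{j≥1}` of integers (0-indexed here: `a j` is the `(j+1)`-st term)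
is strongly eventually periodic: there are a period `p ≥ 1`, integers `b_0, …, b_{p-1}`
and nonnegative integers `c_0, …, c_{p-1}` such that the sequence is the block
`(b_0, …, b_{p-1})` followed by infinite repetition of `(b_0 + c_0, …, b_{p-1} + c_{p-1})`. -/
def SEPSeq (a : ℕ → ℤ) : Prop :=
  ∃ p : ℕ, 0 < p ∧ ∃ bs cs : ℕ → ℤ, (∀ ℓ, 0 ≤ cs ℓ) ∧
    (∀ j < p, a j = bs j) ∧ (∀ j, p ≤ j → a j = bs (j % p) + cs (j % p))

theorem stmt_12 (a : ℕ → ℤ) (hnonneg : ∀ j, 0 ≤ a j)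
    (hbdd : ∃ M : ℤ, ∀ j, a j ≤ M)
    (q : ℕ) (hq : 0 < q) (hmono : ∀ j, a j ≤ a (j + q)) :
    SEPSeq a := by
  obtain ⟨M, hM⟩ := hbdd
  -- step 1: monotone along multiples of q
  have h1 : ∀ m j, a j ≤ a (j + m * q) := by
    intro m
    induction m with
    | zero => simp
    | succ n ih =>
      intro j
      calc a j ≤ a (j + n * q) := ih j
        _ ≤ a (j + n * q + q) := hmono _
        _ = a (j + (n + 1) * q) := by congr 1; ring
  -- step 2: sum over residue classes
  set s : ℕ → ℤ := fun k => ∑ ℓ ∈ Finset.range q, a (ℓ + k * q) with hs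
  have hsmono : ∀ k k', k ≤ k' → s k ≤ s k' := by
    intro k k' hk
    apply Finset.sum_le_sum
    intro i _
    have hh := h1 (k' - k) (i + k * q)
    have harith : i + k * q + (k' - k) * q = i + k' * q := by
      have : (k' - k) * q + k * q = k' * q := by
        rw [← Nat.add_mul, Nat.sub_add_cancel hk]
      omega
    rwa [harith] at hh
  have hsbdd : ∀ k, s k ≤ q * M := by
    intro k
    calc s k ≤ ∑ _ℓ ∈ Finset.range q, M :=
          Finset.sum_le_sum fun i _ => hM _
      _ = q * M := by simp [Finset.sum_const, mul_comm]
  obtain ⟨m, ⟨k0, hk0⟩, hmax⟩ :=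
    Int.exists_greatest_of_bdd (P := fun x => ∃ k, s k = x)
      ⟨q * M, fun z ⟨k, hk⟩ => hk ▸ hsbdd k⟩ ⟨s 0, 0, rfl⟩
  have hsconst : ∀ k, k0 ≤ k → s k = s k0 := fun k hk =>
    le_antisymm (hk0 ▸ hmax (s k) ⟨k, rfl⟩) (hsmono k0 k hk)
  -- step 3: termwise stabilization
  have hstep : ∀ k, k0 ≤ k → ∀ i ∈ Finset.range q, a (i + k * q) = a (i + (k + 1) * q) := by
    intro k hk
    have hle : ∀ i ∈ Finset.range q, a (i + k * q) ≤ a (i + (k + 1) * q) :=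
      fun i _ => by
        have := hmono (i + k * q)
        calc a (i + k * q) ≤ a (i + k * q + q) := this
          _ = a (i + (k + 1) * q) := by congr 1; ring
    have hsum : s k = s (k + 1) := by
      rw [hsconst k hk, hsconst (k + 1) (le_trans hk (Nat.le_succ k))]
    exact (Finset.sum_eq_sum_iff_of_le hle).mp hsum
  -- step 4: a (j + q) = a j for j ≥ k0 * q
  have h3 : ∀ j, k0 * q ≤ j → a (j + q) = a j := by
    intro j hj
    have hdecomp : j = j % q + (j / q) * q := (Nat.mod_add_div' j q).symm
    have hk : k0 ≤ j / q := (Nat.le_div_iff_mul_le hq).mpr hj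
    have := hstep (j / q) hk (j % q) (Finset.mem_range.mpr (Nat.mod_lt j hq))
    have e1 : j % q + (j / q) * q = j := hdecomp.symm
    have e2 : j % q + (j / q + 1) * q = j + q := by
      have : (j / q + 1) * q = (j / q) * q + q := by ring
      omega
    rw [e1, e2] at this
    exact this.symm
  -- step 5: iterate
  have h4 : ∀ m j, k0 * q ≤ j → a (j + m * q) = a j := by
    intro m
    induction m with
    | zero => simp
    | succ n ih =>
      intro j hj
      have e : j + (n + 1) * q = (j + q) + n * q := by ring
      rw [e, ih (j + q) (by omega), h3 j hj]
  -- assemble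
  refine ⟨(k0 + 1) * q, by positivity, a, fun ℓ => a (ℓ + (k0 + 1) * q) - a ℓ,
    fun ℓ => sub_nonneg.mpr (h1 (k0 + 1) ℓ), fun j _ => rfl, ?_⟩
  intro j hj
  set p := (k0 + 1) * q with hp
  have hppos : 0 < p := by positivity
  have hjp : 1 ≤ j / p := (Nat.one_le_div_iff hppos).mpr hj
  have hdecomp : j = j % p + p + (j / p - 1) * p := by
    have h := Nat.mod_add_div' j p
    have : (j / p - 1) * p + p = (j / p) * p := by
      have : (j / p - 1) + 1 = j / p := by omega
      calc (j / p - 1) * p + p = ((j / p - 1) + 1) * p := by ring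
        _ = (j / p) * p := by rw [this]
    omega
  have hbase : k0 * q ≤ j % p + p := by
    have : k0 * q ≤ p := by rw [hp]; nlinarith
    omega
  have key : a j = a (j % p + p) := by
    conv_lhs => rw [hdecomp]
    have e : j % p + p + (j / p - 1) * p = (j % p + p) + ((j / p - 1) * (k0 + 1)) * q := by
      rw [hp]; ring
    rw [e]
    exact h4 _ _ hbase
  rw [key]; ring
end
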